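/- Suppose s₁, s₂, s₃, s₄ : I → ℝ are differentiable on the interval I and trace rectangles gracing γ. Then A₁ + A₃ is differentiable on I and (A₁ + A₃)′(t) = −X(t) · Y′(t) for every t ∈ I. -/

import Mathlib

noncomputable section

/-- The planar cross product `det(u,v) = u₁v₂ − u₂v₁`. -/
def pdet (u v : EuclideanSpace ℝ (Fin 2)) : ℝ := u 0 * v 1 - u 1 * v 0

/-!
Along endpoints `p = γ a`, `q = γ b` moving with velocities `ṗ, q̇`, the arc area changes at the
rate `½ det(q - p, ṗ + q̇)`: the boundary terms of the integral combine with the derivative of the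
chord term. For the opposite sides `p₁p₂` and `p₃p₄` of a parallelogram, where `p₄ - p₃ = p₁ - p₂`
and `ṗ₁ + ṗ₃ = ṗ₂ + ṗ₄`, the two rates add up to `-det(u, v̇)` with `u = p₂ - p₁`, `v = p₃ - p₂`.
In a positively oriented rectangle `v` is `u` turned by a quarter turn and scaled by `Y / X`, so
`det(u, ·) = (X / Y) ⟪v, ·⟫`, and `⟪v, v̇⟫ = Y Y'`.
-/

open InnerProductSpace Filter
local notation "ℝ²" => EuclideanSpace ℝ (Fin 2)

lemma inner_eq_fin_two (u v : ℝ²) : ⟪u, v⟫_ℝ = u 0 * v 0 + u 1 * v 1 := by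
  simp [PiLp.inner_apply, Fin.sum_univ_two, mul_comm]

lemma norm_sq_eq_fin_two (u : ℝ²) : ‖u‖ ^ 2 = u 0 ^ 2 + u 1 ^ 2 := by
  simp [EuclideanSpace.real_norm_sq_eq, Fin.sum_univ_two]

lemma pdet_sq_add_inner_sq (u v : ℝ²) : pdet u v ^ 2 + ⟪u, v⟫_ℝ ^ 2 = ‖u‖ ^ 2 * ‖v‖ ^ 2 := by
  rw [inner_eq_fin_two, norm_sq_eq_fin_two, norm_sq_eq_fin_two, pdet]; ring

lemma pdet_mul_inner (u v w : ℝ²) :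
    pdet u v * ⟪v, w⟫_ℝ = pdet w v * ⟪u, v⟫_ℝ + pdet u w * ‖v‖ ^ 2 := by
  rw [inner_eq_fin_two, inner_eq_fin_two, norm_sq_eq_fin_two]; simp only [pdet]; ring

lemma pdet_eq_norm_mul_norm_of_inner_eq_zero {u v : ℝ²} (h : ⟪u, v⟫_ℝ = 0) (hnn : 0 ≤ pdet u v) :
    pdet u v = ‖u‖ * ‖v‖ := by
  have := pdet_sq_add_inner_sq u v
  rw [h, ← mul_pow] at this
  exact (pow_left_inj₀ hnn (by positivity) two_ne_zero).mp (by linarith)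

lemma pdet_mul_norm_of_inner_eq_zero {u v : ℝ²} (h : ⟪u, v⟫_ℝ = 0) (hpos : 0 < pdet u v)
    (w : ℝ²) : pdet u w * ‖v‖ = ‖u‖ * ⟪v, w⟫_ℝ := by
  have huv := pdet_eq_norm_mul_norm_of_inner_eq_zero h hpos.le
  have hv : 0 < ‖v‖ := pos_of_mul_pos_right (huv ▸ hpos) (norm_nonneg u)
  have := pdet_mul_inner u v w
  rw [h, huv] at this
  refine mul_right_cancel₀ hv.ne' ?_
  linear_combination -this

lemma HasDerivWithinAt.pdet {u v : ℝ → ℝ²} {u' v' : ℝ²} {s : Set ℝ} {x : ℝ}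
    (hu : HasDerivWithinAt u u' s x) (hv : HasDerivWithinAt v v' s x) :
    HasDerivWithinAt (fun t => pdet (u t) (v t)) (pdet (u x) v' + pdet u' (v x)) s x := by
  have coord : ∀ {w : ℝ → ℝ²} {w' : ℝ²}, HasDerivWithinAt w w' s x → ∀ i : Fin 2,
      HasDerivWithinAt (fun t => w t i) (w' i) s x := fun hw i =>
    (EuclideanSpace.proj (𝕜 := ℝ) (ι := Fin 2) i).hasFDerivAt.comp_hasDerivWithinAt x hw
  unfold _root_.pdet
  exact (((coord hu 0).fun_mul (coord hv 1)).fun_sub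
    ((coord hu 1).fun_mul (coord hv 0))).congr_deriv (by ring)

lemma ne_zero_of_pdet_pos {u v : ℝ²} (h : 0 < pdet u v) : v ≠ 0 := by
  rintro rfl; simp [pdet] at h

lemma HasDerivWithinAt.norm {F : Type*} [NormedAddCommGroup F] [InnerProductSpace ℝ F]
    {f : ℝ → F} {f' : F} {s : Set ℝ} {x : ℝ} (hf : HasDerivWithinAt f f' s x) (h0 : f x ≠ 0) :
    HasDerivWithinAt (fun t => ‖f t‖) (⟪f x, f'⟫_ℝ / ‖f x‖) s x := by
  have h := hf.norm_sq.sqrt (by positivity)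
  simp only [Real.sqrt_sq (norm_nonneg _)] at h
  convert h using 1
  field_simp

lemma HasDerivWithinAt.intervalIntegral {E : Type*} [NormedAddCommGroup E] [NormedSpace ℝ E]
    [CompleteSpace E] {f : ℝ → E} (hf : Continuous f) {a b : ℝ → ℝ} {a' b' : ℝ} {s : Set ℝ}
    {x : ℝ} (ha : HasDerivWithinAt a a' s x) (hb : HasDerivWithinAt b b' s x) :
    HasDerivWithinAt (fun t => ∫ u in a t..b t, f u) (b' • f (b x) - a' • f (a x)) s x := by
  have F : ∀ y, HasDerivAt (fun z => ∫ u in (0 : ℝ)..z, f u) (f y) y := fun y =>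
    (hf.integral_hasStrictDerivAt 0 y).hasDerivAt
  refine ((F _).scomp_hasDerivWithinAt x hb |>.sub ((F _).scomp_hasDerivWithinAt x ha)).congr
    (fun t _ => ?_) ?_ <;>
  exact (intervalIntegral.integral_interval_sub_left (hf.intervalIntegrable _ _)
    (hf.intervalIntegrable _ _)).symm

def arcArea (γ : ℝ → ℝ²) (a b : ℝ) : ℝ :=
  (1/2) * (∫ s in a..b, pdet (γ s) (deriv γ s)) + (1/2) * pdet (γ b) (γ a)

lemma HasDerivWithinAt.arcArea {γ : ℝ → ℝ²} (hγ : ContDiff ℝ 1 γ) {a b : ℝ → ℝ} {a' b' : ℝ}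
    {s : Set ℝ} {x : ℝ} (ha : HasDerivWithinAt a a' s x) (hb : HasDerivWithinAt b b' s x) :
    HasDerivWithinAt (fun t => arcArea γ (a t) (b t))
      ((1/2) * _root_.pdet (γ (b x) - γ (a x)) (a' • deriv γ (a x) + b' • deriv γ (b x))) s x := by
  have hγ' (y : ℝ) : HasDerivAt γ (deriv γ y) y := (hγ.differentiable one_ne_zero y).hasDerivAt
  have hcont : Continuous fun u => _root_.pdet (γ u) (deriv γ u) := by
    have := hγ.continuous
    have := hγ.continuous_deriv le_rfl
    unfold _root_.pdet
    fun_prop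
  have h := ((HasDerivWithinAt.intervalIntegral hcont ha hb).const_mul (1/2)).add
    ((((hγ' _).scomp_hasDerivWithinAt x hb).pdet ((hγ' _).scomp_hasDerivWithinAt x ha)).const_mul
      (1/2))
  refine h.congr_deriv ?_
  simp only [_root_.pdet, Function.comp_apply, PiLp.sub_apply, PiLp.add_apply, PiLp.smul_apply,
    smul_eq_mul]
  ring

lemma sub_eq_sub_of_add_eq_add {G : Type*} [AddCommGroup G] {a b c d : G} (h : a + c = b + d) :
    c - b = d - a := by
  rw [sub_eq_sub_iff_add_eq_add, add_comm, h, add_comm]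

lemma pdet_parallelogram {p₁ p₂ p₃ p₄ v₁ v₂ v₃ v₄ : ℝ²} (hp : p₁ + p₃ = p₂ + p₄)
    (hv : v₁ + v₃ = v₂ + v₄) :
    (1/2) * pdet (p₂ - p₁) (v₁ + v₂) + (1/2) * pdet (p₄ - p₃) (v₃ + v₄) =
      -pdet (p₂ - p₁) (v₃ - v₂) := by
  rw [eq_sub_of_add_eq' hp.symm, eq_sub_of_add_eq' hv.symm]
  simp only [pdet, PiLp.sub_apply, PiLp.add_apply]
  ring

lemma pdet_rectangle {p₁ p₂ p₃ p₄ v₁ v₂ v₃ v₄ : ℝ²} (hp : p₁ + p₃ = p₂ + p₄)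
    (hv : v₁ + v₃ = v₂ + v₄) (hperp : ⟪p₂ - p₁, p₄ - p₁⟫_ℝ = 0)
    (hccw : 0 < pdet (p₂ - p₁) (p₄ - p₁)) :
    (1/2) * pdet (p₂ - p₁) (v₁ + v₂) + (1/2) * pdet (p₄ - p₃) (v₃ + v₄) =
      -(‖p₂ - p₁‖ * (⟪p₃ - p₂, v₃ - v₂⟫_ℝ / ‖p₃ - p₂‖)) := by
  have hside : ‖p₄ - p₁‖ ≠ 0 := norm_ne_zero_iff.mpr (ne_zero_of_pdet_pos hccw)
  rw [pdet_parallelogram hp hv, sub_eq_sub_of_add_eq_add hp, ← mul_div_assoc,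
    ← pdet_mul_norm_of_inner_eq_zero hperp hccw, mul_div_cancel_right₀ _ hside]

theorem stmt3_general
    (γ : ℝ → EuclideanSpace ℝ (Fin 2)) (hγ : ContDiff ℝ 1 γ)
    (s₁ s₂ s₃ s₄ : ℝ → ℝ)
    (I : Set ℝ)
    (hs₁ : ∀ t ∈ I, DifferentiableWithinAt ℝ s₁ I t)
    (hs₂ : ∀ t ∈ I, DifferentiableWithinAt ℝ s₂ I t)
    (hs₃ : ∀ t ∈ I, DifferentiableWithinAt ℝ s₃ I t)
    (hs₄ : ∀ t ∈ I, DifferentiableWithinAt ℝ s₄ I t)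
    (hpar : ∀ t ∈ I, γ (s₁ t) + γ (s₃ t) = γ (s₂ t) + γ (s₄ t))
    (hperp : ∀ t ∈ I, inner ℝ (γ (s₂ t) - γ (s₁ t)) (γ (s₄ t) - γ (s₁ t)) = (0 : ℝ))
    (hccw : ∀ t ∈ I, pdet (γ (s₂ t) - γ (s₁ t)) (γ (s₄ t) - γ (s₁ t)) > 0)
    (X Y : ℝ → ℝ)
    (hX : X = fun t => ‖γ (s₂ t) - γ (s₁ t)‖)
    (hY : Y = fun t => ‖γ (s₃ t) - γ (s₂ t)‖)
    (A₁ A₃ : ℝ → ℝ)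
    (hA₁ : A₁ = fun t => (1/2) * (∫ s in (s₁ t)..(s₂ t), pdet (γ s) (deriv γ s))
        + (1/2) * pdet (γ (s₂ t)) (γ (s₁ t)))
    (hA₃ : A₃ = fun t => (1/2) * (∫ s in (s₃ t)..(s₄ t), pdet (γ s) (deriv γ s))
        + (1/2) * pdet (γ (s₄ t)) (γ (s₃ t)))
:
    ∀ t ∈ I, HasDerivWithinAt (fun t => A₁ t + A₃ t)
      (-(X t * derivWithin Y I t)) I t := by
  intro t ht
  by_cases hacc : AccPt t (𝓟 I)
  swap
  · exact HasFDerivWithinAt.of_not_accPt hacc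
  subst hX hY hA₁ hA₃
  have hvel {σ : ℝ → ℝ} (hσ : ∀ t ∈ I, DifferentiableWithinAt ℝ σ I t) :
      HasDerivWithinAt (fun τ => γ (σ τ)) (derivWithin σ I t • deriv γ (σ t)) I t :=
    (hγ.differentiable one_ne_zero _).hasDerivAt.scomp_hasDerivWithinAt t (hσ t ht).hasDerivWithinAt
  -- the parallelogram relation holds on all of `I`, and `t` is not isolated in `I`
  have hvpar := hacc.uniqueDiffWithinAt.eq_deriv _ ((hvel hs₁).add (hvel hs₃))
    (((hvel hs₂).add (hvel hs₄)).congr hpar (hpar t ht))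
  have hside : γ (s₃ t) - γ (s₂ t) ≠ 0 := by
    rw [sub_eq_sub_of_add_eq_add (hpar t ht)]
    exact ne_zero_of_pdet_pos (hccw t ht)
  rw [(((hvel hs₃).fun_sub (hvel hs₂)).norm hside).derivWithin hacc.uniqueDiffWithinAt,
    ← pdet_rectangle (hpar t ht) hvpar (hperp t ht) (hccw t ht)]
  exact (((hs₁ t ht).hasDerivWithinAt.arcArea hγ (hs₂ t ht).hasDerivWithinAt).add
    ((hs₃ t ht).hasDerivWithinAt.arcArea hγ (hs₄ t ht).hasDerivWithinAt))

/-- If `s₁,…,s₄` are differentiable on the interval `I` and trace rectangles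
gracing `γ`, then `A₁ + A₃` is differentiable on `I` with
`(A₁ + A₃)′ = −X · Y′`. -/
theorem stmt3
    (γ : ℝ → EuclideanSpace ℝ (Fin 2)) (hγ : ContDiff ℝ 1 γ)
    (hper : ∀ s : ℝ, γ (s + 1) = γ s)
    (s₁ s₂ s₃ s₄ : ℝ → ℝ)
    (I : Set ℝ) (hI : I.OrdConnected)
    (hs₁ : ∀ t ∈ I, DifferentiableWithinAt ℝ s₁ I t)
    (hs₂ : ∀ t ∈ I, DifferentiableWithinAt ℝ s₂ I t)
    (hs₃ : ∀ t ∈ I, DifferentiableWithinAt ℝ s₃ I t)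
    (hs₄ : ∀ t ∈ I, DifferentiableWithinAt ℝ s₄ I t)
    (hpar : ∀ t ∈ I, γ (s₁ t) + γ (s₃ t) = γ (s₂ t) + γ (s₄ t))
    (hperp : ∀ t ∈ I, inner ℝ (γ (s₂ t) - γ (s₁ t)) (γ (s₄ t) - γ (s₁ t)) = (0 : ℝ))
    (hccw : ∀ t ∈ I, pdet (γ (s₂ t) - γ (s₁ t)) (γ (s₄ t) - γ (s₁ t)) > 0)
    (X Y : ℝ → ℝ)
    (hX : X = fun t => ‖γ (s₂ t) - γ (s₁ t)‖)
    (hY : Y = fun t => ‖γ (s₃ t) - γ (s₂ t)‖)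
    (A₁ A₂ A₃ A₄ : ℝ → ℝ)
    (hA₁ : A₁ = fun t => (1/2) * (∫ s in (s₁ t)..(s₂ t), pdet (γ s) (deriv γ s))
        + (1/2) * pdet (γ (s₂ t)) (γ (s₁ t)))
    (hA₂ : A₂ = fun t => (1/2) * (∫ s in (s₂ t)..(s₃ t), pdet (γ s) (deriv γ s))
        + (1/2) * pdet (γ (s₃ t)) (γ (s₂ t)))
    (hA₃ : A₃ = fun t => (1/2) * (∫ s in (s₃ t)..(s₄ t), pdet (γ s) (deriv γ s))
        + (1/2) * pdet (γ (s₄ t)) (γ (s₃ t)))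
    (hA₄ : A₄ = fun t => (1/2) * (∫ s in (s₄ t)..(s₁ t + 1), pdet (γ s) (deriv γ s))
        + (1/2) * pdet (γ (s₁ t + 1)) (γ (s₄ t)))
:
    ∀ t ∈ I, HasDerivWithinAt (fun t => A₁ t + A₃ t)
      (-(X t * derivWithin Y I t)) I t :=
  stmt3_general γ hγ s₁ s₂ s₃ s₄ I hs₁ hs₂ hs₃ hs₄ hpar hperp hccw X Y hX hY A₁ A₃ hA₁ hA₃
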